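/- arXiv:1104.1291 — 3 statements merged into one kernel-verified Lean document; each statement's English description precedes it below -/
import Mathlib

section
/- For all real numbers $b,c \ge 0$ and every even integer $q \ge 2$: $2(b^{q-1}-c^{q-1})(b-c) \ge (b-c)^2 (b^{q-2}+c^{q-2})$. -/
/-!
The difference of the two sides factors as `(b - c) (b + c) (b^(q-2) - c^(q-2))`,
and `b - c` and `b^(q-2) - c^(q-2)` have the same sign because `x ↦ x^(q-2)` is monotone on `[0, ∞)`.
-/

section

variable {R : Type*} [CommRing R] [LinearOrder R] [IsStrictOrderedRing R]

lemma mul_sub_pow_sub_pow_nonneg {b c : R} (hb : 0 ≤ b) (hc : 0 ≤ c) (n : ℕ) :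
    0 ≤ (b - c) * (b ^ n - c ^ n) := by
  rcases le_total b c with hbc | hcb
  · exact mul_nonneg_of_nonpos_of_nonpos (sub_nonpos.2 hbc)
      (sub_nonpos.2 (pow_le_pow_left₀ hb hbc n))
  · exact mul_nonneg (sub_nonneg.2 hcb) (sub_nonneg.2 (pow_le_pow_left₀ hc hcb n))

lemma sq_sub_mul_pow_add_pow_le {b c : R} (hb : 0 ≤ b) (hc : 0 ≤ c) (n : ℕ) :
    (b - c) ^ 2 * (b ^ n + c ^ n) ≤ 2 * ((b ^ (n + 1) - c ^ (n + 1)) * (b - c)) := by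
  have gap : 2 * ((b ^ (n + 1) - c ^ (n + 1)) * (b - c)) - (b - c) ^ 2 * (b ^ n + c ^ n)
      = (b + c) * ((b - c) * (b ^ n - c ^ n)) := by ring
  have := mul_nonneg (add_nonneg hb hc) (mul_sub_pow_sub_pow_nonneg hb hc n)
  linarith

end

theorem poly_ineq_even_general (b c : ℝ) (hb : 0 ≤ b) (hc : 0 ≤ c)
    (q : ℕ) (hq : 2 ≤ q) :
    (b - c) ^ 2 * (b ^ (q - 2) + c ^ (q - 2))
      ≤ 2 * ((b ^ (q - 1) - c ^ (q - 1)) * (b - c)) := by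
  obtain ⟨n, rfl⟩ : ∃ n, q = n + 2 := ⟨q - 2, by omega⟩
  simpa only [Nat.add_sub_cancel, Nat.add_succ_sub_one] using sq_sub_mul_pow_add_pow_le hb hc n

/-- Elementary polynomial inequality: for `b, c ≥ 0` and even `q ≥ 2`,
`2(b^{q-1} - c^{q-1})(b - c) ≥ (b - c)^2 (b^{q-2} + c^{q-2})`. -/
theorem poly_ineq_even (b c : ℝ) (hb : 0 ≤ b) (hc : 0 ≤ c)
    (q : ℕ) (hq : 2 ≤ q) (hqe : Even q) :
    (b - c) ^ 2 * (b ^ (q - 2) + c ^ (q - 2))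
      ≤ 2 * ((b ^ (q - 1) - c ^ (q - 1)) * (b - c)) :=
  poly_ineq_even_general b c hb hc q hq
end

section
/- Energy estimate for the discrete Green's function: under the hypotheses of the definition of $G_T$ (uniformly elliptic conductivities $\alpha \le a \le \beta$ on $\mathbb{Z}^d$, $T>0$), the truncation $G_{T,M}:=\min\{G_T(\cdot,0),M\}$ satisfies $T^{-1}\sum_{x\in\mathbb{Z}^d} G_{T,M}(x)^2 + \alpha \sum_{x\in\mathbb{Z}^d}|\nabla G_{T,M}(x)|^2 \le M$, provided $G_T \ge 0$. -/
/-- The `i`-th canonical unit vector of the lattice `ℤ^d`. -/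
def unitv (d : ℕ) (i : Fin d) : Fin d → ℤ := fun j => if j = i then 1 else 0

/-!
Test the weak formulation with `ζ = min G M`, which lies in `ℓ²` because `|min G M| ≤ |G|`
for `M ≥ 0`. Truncation at `M ≥ 0` gives `(min G M)² ≤ (min G M) G` pointwise, and since
`t ↦ min t M` is monotone and 1-Lipschitz, `(∇ min G M)² ≤ (∇ min G M)(∇G)`, so that
`α (∇ min G M)² ≤ (∇ min G M) a (∇G)`. The left side of the weak formulation thus dominates
the energy of `min G M`, while its right side is `min (G 0) M ≤ M`. Every series involved is
squeezed between `0` and a multiple of `∑ G²`, hence converges.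
-/

lemma memℓp_two_iff_summable_sq {X : Type*} {f : X → ℝ} :
    Memℓp f 2 ↔ Summable fun x => f x ^ 2 := by
  rw [memℓp_gen_iff (by norm_num)]
  norm_num [Real.norm_eq_abs, sq_abs]

lemma tsum_le_tsum_of_nonneg_of_le {X : Type*} {f g : X → ℝ} (hf : ∀ x, 0 ≤ f x)
    (hfg : ∀ x, f x ≤ g x) (hg : Summable g) : ∑' x, f x ≤ ∑' x, g x :=
  hg.of_nonneg_of_le hf hfg |>.tsum_le_tsum hfg hg

section Truncation

variable {M : ℝ}

lemma sq_min_le_min_mul (hM : 0 ≤ M) (g : ℝ) : min g M ^ 2 ≤ min g M * g := by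
  rcases le_total g M with h | h <;> simp only [min_eq_left, min_eq_right, h] <;> nlinarith

lemma min_mul_le_sq (hM : 0 ≤ M) (g : ℝ) : min g M * g ≤ g ^ 2 := by
  rcases le_total g M with h | h <;> simp only [min_eq_left, min_eq_right, h] <;> nlinarith

lemma sq_min_le_sq (hM : 0 ≤ M) (g : ℝ) : min g M ^ 2 ≤ g ^ 2 :=
  (sq_min_le_min_mul hM g).trans (min_mul_le_sq hM g)

lemma sq_sub_min_le_mul_sub (g g' : ℝ) :
    (min g' M - min g M) ^ 2 ≤ (min g' M - min g M) * (g' - g) := by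
  simp only [min_def]; split_ifs <;> nlinarith

lemma mul_sub_min_le_sq_sub (g g' : ℝ) :
    (min g' M - min g M) * (g' - g) ≤ (g' - g) ^ 2 := by
  simp only [min_def]; split_ifs <;> nlinarith

lemma truncated_flux_bounds {α β c : ℝ} (hα : 0 ≤ α) (hc : c ∈ Set.Icc α β) (g g' : ℝ) :
    α * (min g' M - min g M) ^ 2 ≤ (min g' M - min g M) * (c * (g' - g)) ∧
      (min g' M - min g M) * (c * (g' - g)) ≤ β * (g' - g) ^ 2 := by
  have hlow := sq_sub_min_le_mul_sub (M := M) g g'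
  have hup := mul_sub_min_le_sq_sub (M := M) g g'
  have hprod : 0 ≤ (min g' M - min g M) * (g' - g) := (sq_nonneg _).trans hlow
  obtain ⟨hαc, hcβ⟩ := hc
  have hβ : 0 ≤ β := hα.trans (hαc.trans hcβ)
  rw [mul_left_comm]
  constructor
  · calc α * (min g' M - min g M) ^ 2
        ≤ α * ((min g' M - min g M) * (g' - g)) := mul_le_mul_of_nonneg_left hlow hα
      _ ≤ c * ((min g' M - min g M) * (g' - g)) := mul_le_mul_of_nonneg_right hαc hprod
  · calc c * ((min g' M - min g M) * (g' - g))
        ≤ β * ((min g' M - min g M) * (g' - g)) := mul_le_mul_of_nonneg_right hcβ hprod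
      _ ≤ β * (g' - g) ^ 2 := mul_le_mul_of_nonneg_left hup hβ

end Truncation

lemma tsum_sq_min_le_tsum_min_mul {X : Type*} {G : X → ℝ} {M : ℝ} (hM : 0 ≤ M)
    (hG : Summable fun x => G x ^ 2) :
    ∑' x, min (G x) M ^ 2 ≤ ∑' x, min (G x) M * G x :=
  tsum_le_tsum_of_nonneg_of_le (fun _ => sq_nonneg _) (fun _ => sq_min_le_min_mul hM _)
    (hG.of_nonneg_of_le (fun _ => (sq_nonneg _).trans (sq_min_le_min_mul hM _))
      fun _ => min_mul_le_sq hM _)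

section Lattice

variable {X ι : Type*} [AddGroup X] [Fintype ι] {e : ι → X} {G : X → ℝ} {M : ℝ}

lemma summable_sum_sq_sub_shift (hG : Summable fun x => G x ^ 2) :
    Summable fun x => ∑ i, (G (x + e i) - G x) ^ 2 := by
  refine summable_sum fun i _ => ?_
  have hshift : Summable fun x => G (x + e i) ^ 2 :=
    hG.comp_injective (add_left_injective (e i))
  refine ((hshift.mul_left 2).add (hG.mul_left 2)).of_nonneg_of_le (fun x => sq_nonneg _)
    fun x => ?_
  linarith [sq_nonneg (G (x + e i) + G x)]

lemma tsum_energy_min_le_tsum_flux {α β : ℝ} (hα : 0 ≤ α) {a : X → ι → ℝ}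
    (ha : ∀ x i, a x i ∈ Set.Icc α β) (hG : Summable fun x => G x ^ 2) :
    α * ∑' x, ∑ i, (min (G (x + e i)) M - min (G x) M) ^ 2 ≤
      ∑' x, ∑ i, (min (G (x + e i)) M - min (G x) M) * (a x i * (G (x + e i) - G x)) := by
  have hbounds (x : X) (i : ι) := truncated_flux_bounds (M := M) hα (ha x i) (G x) (G (x + e i))
  have hflux : Summable fun x =>
      ∑ i, (min (G (x + e i)) M - min (G x) M) * (a x i * (G (x + e i) - G x)) := by
    refine ((summable_sum_sq_sub_shift (e := e) hG).mul_left β).of_nonneg_of_le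
      (fun x => Finset.sum_nonneg fun i _ => ?_) fun x => ?_
    · exact (mul_nonneg hα (sq_nonneg _)).trans (hbounds x i).1
    · rw [Finset.mul_sum]
      exact Finset.sum_le_sum fun i _ => (hbounds x i).2
  rw [← tsum_mul_left]
  refine tsum_le_tsum_of_nonneg_of_le
    (fun x => mul_nonneg hα (Finset.sum_nonneg fun i _ => sq_nonneg _)) (fun x => ?_) hflux
  rw [Finset.mul_sum]
  exact Finset.sum_le_sum fun i _ => (hbounds x i).1

end Lattice

theorem truncated_green_energy_estimate_general (d : ℕ) (α β T M : ℝ)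
    (hα : 0 < α) (hT : 0 < T) (hM : 0 < M)
    (a : (Fin d → ℤ) → Fin d → ℝ) (ha : ∀ x i, a x i ∈ Set.Icc α β)
    (G : (Fin d → ℤ) → ℝ) (hGL2 : Memℓp G 2)
    (hG : ∀ ζ : (Fin d → ℤ) → ℝ, Memℓp ζ 2 →
      T⁻¹ * ∑' x : Fin d → ℤ, ζ x * G x
        + ∑' x : Fin d → ℤ, ∑ i : Fin d,
            (ζ (x + unitv d i) - ζ x) * (a x i * (G (x + unitv d i) - G x))
        = ζ 0) :
    T⁻¹ * ∑' x : Fin d → ℤ, (min (G x) M) ^ 2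
      + α * ∑' x : Fin d → ℤ, ∑ i : Fin d,
          (min (G (x + unitv d i)) M - min (G x) M) ^ 2
      ≤ M := by
  have hG2 := memℓp_two_iff_summable_sq.mp hGL2
  have htest : Memℓp (fun x => min (G x) M) 2 :=
    memℓp_two_iff_summable_sq.mpr <|
      hG2.of_nonneg_of_le (fun _ => sq_nonneg _) fun x => sq_min_le_sq hM.le (G x)
  calc _ ≤ T⁻¹ * ∑' x, min (G x) M * G x + ∑' x, ∑ i,
          (min (G (x + unitv d i)) M - min (G x) M) * (a x i * (G (x + unitv d i) - G x)) :=
        add_le_add (mul_le_mul_of_nonneg_left (tsum_sq_min_le_tsum_min_mul hM.le hG2)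
          (inv_nonneg.mpr hT.le)) (tsum_energy_min_le_tsum_flux hα.le ha hG2)
    _ = min (G 0) M := hG _ htest
    _ ≤ M := min_le_right _ _

/-- Energy estimate for the truncated Green's function `G_{T,M} = min{G_T, M}`:
`T⁻¹ ∑ G_{T,M}² + α ∑ |∇G_{T,M}|² ≤ M`, provided `G_T ≥ 0`. -/
theorem truncated_green_energy_estimate (d : ℕ) (hd : 2 ≤ d) (α β T M : ℝ)
    (hα : 0 < α) (hαβ : α ≤ β) (hT : 0 < T) (hM : 0 < M)
    (a : (Fin d → ℤ) → Fin d → ℝ) (ha : ∀ x i, a x i ∈ Set.Icc α β)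
    (G : (Fin d → ℤ) → ℝ) (hGL2 : Memℓp G 2) (hGnonneg : ∀ x, 0 ≤ G x)
    (hG : ∀ ζ : (Fin d → ℤ) → ℝ, Memℓp ζ 2 →
      T⁻¹ * ∑' x : Fin d → ℤ, ζ x * G x
        + ∑' x : Fin d → ℤ, ∑ i : Fin d,
            (ζ (x + unitv d i) - ζ x) * (a x i * (G (x + unitv d i) - G x))
        = ζ 0) :
    T⁻¹ * ∑' x : Fin d → ℤ, (min (G x) M) ^ 2
      + α * ∑' x : Fin d → ℤ, ∑ i : Fin d,
          (min (G (x + unitv d i)) M - min (G x) M) ^ 2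
      ≤ M :=
  truncated_green_energy_estimate_general d α β T M hα hT hM a ha G hGL2 hG
end

section
/- Convolution decay lemma (case $d>2$): Let $d>2$ and let $h\in L^2_{loc}(\mathbb{Z}^d)$, $h\ge 0$, satisfy $\sum_{R<|z|\le 2R} h(z)^2 \lesssim R^{2-d}$ for all $R\gg 1$ and $\sum_{|z|\le R} h(z)^2 \lesssim 1$ for $R\sim 1$. Then for all $R\gg 1$: $\sum_{|x|\le R} \sum_{z\in\mathbb{Z}^d} h(z)\,h(z-x) \lesssim R^2$. -/
noncomputable def znorm (d : ℕ) (x : Fin d → ℤ) : ℝ := ‖(fun i => (x i : ℝ) : Fin d → ℝ)‖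

/-!
Cauchy–Schwarz on the dyadic annuli `ρ < |z| ≤ 2ρ`, which contain `≲ ρ^d` points, turns the
annular bound `∑ h² ≲ ρ^(2-d)` into `∑ h ≲ ρ`; summing over dyadic scales gives
`∑_{|z| ≤ r} h ≲ r` and, since `d > 2`, the geometric tail bound `∑_{|z| > r} h² ≲ r^(2-d)`.
Writing `∑_{|x| ≤ R} ∑_z h(z) h(z - x)`, the pairs with `|z| ≤ 2R` contribute at most
`(∑_{|z| ≤ 2R} h) (∑_{|w| ≤ 3R} h) ≲ R²`, while for `|z| > 2R` both `|z|` and `|z - x|` exceed `R`,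
so `h(z) h(z - x) ≤ (h(z)² + h(z - x)²) / 2` bounds their contribution by
`#{|x| ≤ R} · ∑_{|w| > R} h(w)² ≲ R^d R^(2-d) = R²`.
-/

open Finset

lemma tsum_subtype_eq_sum_of_iff {β M : Type*} [AddCommMonoid M] [TopologicalSpace M]
    {p : β → Prop} (s : Finset β) (hs : ∀ x, p x ↔ x ∈ s) (f : β → M) :
    ∑' x : {x // p x}, f x = ∑ x ∈ s, f x :=
  (Equiv.tsum_eq (Equiv.subtypeEquivRight hs) fun x => f x).trans (s.tsum_subtype f)

lemma Real.pow_mul_rpow_two_sub {ρ : ℝ} (hρ : 0 < ρ) (n : ℕ) :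
    ρ ^ n * ρ ^ (2 - (n : ℝ)) = ρ ^ 2 := by
  rw [Real.rpow_sub_natCast hρ.ne', Real.rpow_two, mul_div_cancel₀ _ (pow_ne_zero _ hρ.ne')]

lemma sum_le_sqrt_card_mul {ι : Type*} {h : ι → ℝ} (s : Finset ι) {A B : ℝ}
    (hcard : (#s : ℝ) ≤ A) (hsq : ∑ i ∈ s, h i ^ 2 ≤ B) :
    ∑ i ∈ s, h i ≤ √(A * B) :=
  (le_abs_self _).trans <| Real.abs_le_sqrt <| sq_sum_le_card_mul_sum_sq.trans <|
    mul_le_mul hcard hsq (sum_nonneg fun _ _ => sq_nonneg _) ((Nat.cast_nonneg _).trans hcard)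

lemma summable_mul_comp_sub {G : Type*} [AddGroup G] {h : G → ℝ}
    (hsq : Summable fun z => h z ^ 2) (x : G) :
    Summable fun z => h z * h (z - x) := by
  refine Summable.of_norm_bounded (g := fun z => (h z ^ 2 + h (z - x) ^ 2) / 2)
    ((hsq.add (hsq.comp_injective (sub_left_injective (b := x)))).div_const 2) fun z => ?_
  rw [norm_mul, Real.norm_eq_abs, Real.norm_eq_abs]
  nlinarith [two_mul_le_add_sq |h z| |h (z - x)|, sq_abs (h z), sq_abs (h (z - x))]

section Shells

variable {E : Type*} [SeminormedAddCommGroup E] [ProperSpace E] [DiscreteTopology E]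

noncomputable def closedBallFinset (r : ℝ) : Finset E :=
  (isCompact_closedBall (0 : E) r).finite_of_discrete.toFinset

@[simp]
lemma mem_closedBallFinset {r : ℝ} {x : E} : x ∈ closedBallFinset r ↔ ‖x‖ ≤ r := by
  simp [closedBallFinset]

lemma closedBallFinset_mono {r s : ℝ} (hrs : r ≤ s) :
    (closedBallFinset r : Finset E) ⊆ closedBallFinset s :=
  fun _ hx => mem_closedBallFinset.2 ((mem_closedBallFinset.1 hx).trans hrs)

noncomputable def shellFinset (r s : ℝ) : Finset E := {z ∈ closedBallFinset s | r < ‖z‖}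

@[simp]
lemma mem_shellFinset {r s : ℝ} {x : E} : x ∈ shellFinset r s ↔ r < ‖x‖ ∧ ‖x‖ ≤ s := by
  simp [shellFinset, and_comm]

lemma sum_closedBallFinset_add_sum_shellFinset {M : Type*} [AddCommMonoid M] (f : E → M)
    {r s : ℝ} (hrs : r ≤ s) :
    ∑ z ∈ closedBallFinset r, f z + ∑ z ∈ shellFinset r s, f z = ∑ z ∈ closedBallFinset s, f z := by
  rw [shellFinset, ← sum_filter_not_add_sum_filter (closedBallFinset s) (fun z => r < ‖z‖)]
  congr 2
  ext z
  simp only [mem_closedBallFinset, mem_filter, not_lt]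
  exact ⟨fun hz => ⟨hz.trans hrs, hz⟩, And.right⟩

lemma sum_shellFinset_add_sum_shellFinset {M : Type*} [AddCommGroup M] (f : E → M)
    {r s t : ℝ} (hrs : r ≤ s) (hst : s ≤ t) :
    ∑ z ∈ shellFinset r s, f z + ∑ z ∈ shellFinset s t, f z = ∑ z ∈ shellFinset r t, f z := by
  rw [← add_right_inj (∑ z ∈ closedBallFinset r, f z), ← add_assoc,
    sum_closedBallFinset_add_sum_shellFinset f hrs, sum_closedBallFinset_add_sum_shellFinset f hst,
    sum_closedBallFinset_add_sum_shellFinset f (hrs.trans hst)]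

lemma exists_subset_closedBallFinset_two_pow_mul (u : Finset E) {r : ℝ} (hr : 0 < r) :
    ∃ K : ℕ, u ⊆ closedBallFinset (2 ^ K * r) := by
  obtain ⟨K, hK⟩ := pow_unbounded_of_one_lt ((∑ z ∈ u, ‖z‖) / r) one_lt_two
  refine ⟨K, fun z hz => mem_closedBallFinset.2 ?_⟩
  rw [div_lt_iff₀ hr] at hK
  exact (single_le_sum (fun y _ => norm_nonneg y) hz).trans hK.le

section DyadicTail

variable {f : E → ℝ} {C p r : ℝ} (hC : 0 ≤ C) (hp : p < 0) (hr : 0 < r)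
  (hshell : ∀ ρ ≥ r, ∑ z ∈ shellFinset ρ (2 * ρ), f z ≤ C * ρ ^ p)
include hC hp hr hshell

lemma sum_shellFinset_two_pow_mul_le (K : ℕ) :
    ∑ z ∈ shellFinset r (2 ^ K * r), f z ≤ C * (1 - 2 ^ p)⁻¹ * r ^ p := by
  have hq : (2 : ℝ) ^ p < 1 := Real.rpow_lt_one_of_one_lt_of_neg one_lt_two hp
  have hgeom (n : ℕ) : ∑ z ∈ shellFinset r (2 ^ n * r), f z ≤
      C * (∑ k ∈ range n, ((2 : ℝ) ^ p) ^ k) * r ^ p := by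
    induction n with
    | zero =>
      have hempty : shellFinset r (2 ^ 0 * r) = (∅ : Finset E) := eq_empty_of_forall_notMem
        fun z hz => by rw [mem_shellFinset, pow_zero, one_mul] at hz; exact hz.1.not_ge hz.2
      rw [hempty, sum_empty, range_zero, sum_empty, mul_zero, zero_mul]
    | succ n ih =>
      have hscale : r ≤ 2 ^ n * r := le_mul_of_one_le_left hr.le (one_le_pow₀ one_le_two)
      have hlast := hshell _ hscale
      rw [Real.mul_rpow (by positivity) hr.le, ← Real.rpow_pow_comm zero_le_two] at hlast
      rw [pow_succ', mul_assoc, ← sum_shellFinset_add_sum_shellFinset f hscale (by linarith),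
        sum_range_succ, mul_add, add_mul]
      linarith
  calc ∑ z ∈ shellFinset r (2 ^ K * r), f z ≤ C * (∑ k ∈ range K, ((2 : ℝ) ^ p) ^ k) * r ^ p :=
        hgeom K
    _ ≤ C * (1 - 2 ^ p)⁻¹ * r ^ p := by
        have hsum :=
          geom_sum_Ico_le_of_lt_one (m := 0) (n := K) (Real.rpow_nonneg zero_le_two p) hq
        rw [← range_eq_Ico, pow_zero, one_div] at hsum
        gcongr

lemma summable_of_sum_shellFinset_le (hf : 0 ≤ f) : Summable f := by
  refine summable_of_sum_le hf (c := ∑ z ∈ closedBallFinset r, f z + C * (1 - 2 ^ p)⁻¹ * r ^ p)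
    fun u => ?_
  obtain ⟨K, hK⟩ := exists_subset_closedBallFinset_two_pow_mul u hr
  calc ∑ z ∈ u, f z ≤ ∑ z ∈ closedBallFinset (2 ^ K * r), f z :=
        sum_le_sum_of_subset_of_nonneg hK fun z _ _ => hf z
    _ = ∑ z ∈ closedBallFinset r, f z + ∑ z ∈ shellFinset r (2 ^ K * r), f z :=
        (sum_closedBallFinset_add_sum_shellFinset f
          (le_mul_of_one_le_left hr.le (one_le_pow₀ one_le_two))).symm
    _ ≤ _ := by linarith [sum_shellFinset_two_pow_mul_le hC hp hr hshell K]

lemma tsum_lt_norm_le_of_sum_shellFinset_le (hf : 0 ≤ f) :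
    ∑' z : {z : E // r < ‖z‖}, f z ≤ C * (1 - 2 ^ p)⁻¹ * r ^ p :=
  Real.tsum_le_of_sum_le (fun z => hf z) fun u => by
    obtain ⟨K, hK⟩ :=
      exists_subset_closedBallFinset_two_pow_mul (u.map (Function.Embedding.subtype _)) hr
    calc ∑ z ∈ u, f z = ∑ z ∈ u.map (Function.Embedding.subtype _), f z :=
          (sum_map u (Function.Embedding.subtype _) f).symm
      _ ≤ ∑ z ∈ shellFinset r (2 ^ K * r), f z := by
          refine sum_le_sum_of_subset_of_nonneg (fun z hz => ?_) fun z _ _ => hf z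
          obtain ⟨w, -, rfl⟩ := mem_map.1 hz
          exact mem_shellFinset.2 ⟨w.2, mem_closedBallFinset.1 (hK hz)⟩
      _ ≤ _ := sum_shellFinset_two_pow_mul_le hC hp hr hshell K

end DyadicTail

section Convolution

variable {h : E → ℝ}

lemma tsum_compl_closedBallFinset_mul_comp_sub_le (hsq : Summable fun z => h z ^ 2)
    {R : ℝ} {x : E} (hx : ‖x‖ ≤ R) :
    ∑' z : ↑((closedBallFinset (2 * R) : Finset E) : Set E)ᶜ, h z * h (z - x)
      ≤ ∑' w : {w : E // R < ‖w‖}, h w ^ 2 := by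
  set far : Set E := ((closedBallFinset (2 * R) : Finset E) : Set E)ᶜ
  have hfar (z : far) : 2 * R < ‖(z : E)‖ := lt_of_not_ge fun hz => z.2 (mem_closedBallFinset.2 hz)
  let self : far → {w : E // R < ‖w‖} := fun z => ⟨z, by linarith [hfar z, norm_nonneg x]⟩
  let shift : far → {w : E // R < ‖w‖} :=
    fun z => ⟨z - x, by linarith [hfar z, norm_sub_norm_le (z : E) x]⟩
  have hself : Function.Injective self := fun z w hzw =>
    Subtype.ext (congrArg Subtype.val hzw :)
  have hshift : Function.Injective shift := fun z w hzw =>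
    Subtype.ext (sub_left_injective (congrArg Subtype.val hzw :))
  have htail : Summable fun w : {w : E // R < ‖w‖} => h w ^ 2 := hsq.subtype _
  have hself_le : ∑' z, h (self z) ^ 2 ≤ ∑' w : {w : E // R < ‖w‖}, h w ^ 2 :=
    tsum_comp_le_tsum_of_inj htail (fun _ => sq_nonneg _) hself
  have hshift_le : ∑' z, h (shift z) ^ 2 ≤ ∑' w : {w : E // R < ‖w‖}, h w ^ 2 :=
    tsum_comp_le_tsum_of_inj htail (fun _ => sq_nonneg _) hshift
  have hs₁ : Summable fun z => h (self z) ^ 2 := htail.comp_injective hself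
  have hs₂ : Summable fun z => h (shift z) ^ 2 := htail.comp_injective hshift
  have hamgm : 2 * ∑' z : far, h z * h (z - x)
      ≤ ∑' z, h (self z) ^ 2 + ∑' z, h (shift z) ^ 2 := by
    rw [← tsum_mul_left, ← hs₁.tsum_add hs₂]
    refine Summable.tsum_le_tsum (fun z => ?_)
      (((summable_mul_comp_sub hsq x).subtype _).mul_left 2) (hs₁.add hs₂)
    rw [← mul_assoc]
    exact two_mul_le_add_sq (h z) (h (z - x))
  linarith

lemma sum_closedBallFinset_comp_sub_le (hpos : 0 ≤ h) {R : ℝ} {z : E} (hz : ‖z‖ ≤ 2 * R) :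
    ∑ x ∈ closedBallFinset R, h (z - x) ≤ ∑ w ∈ closedBallFinset (3 * R), h w := by
  classical
  rw [← sum_image fun x _ y _ hxy => sub_right_injective hxy]
  refine sum_le_sum_of_subset_of_nonneg (fun w hw => ?_) fun w _ _ => hpos w
  obtain ⟨x, hx, rfl⟩ := mem_image.1 hw
  rw [mem_closedBallFinset] at hx ⊢
  linarith [norm_sub_le z x]

lemma sum_closedBallFinset_tsum_mul_comp_sub_le (hpos : 0 ≤ h) (hsq : Summable fun z => h z ^ 2)
    (R : ℝ) :
    ∑ x ∈ closedBallFinset R, ∑' z, h z * h (z - x)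
      ≤ (∑ z ∈ closedBallFinset (2 * R), h z) * ∑ w ∈ closedBallFinset (3 * R), h w
        + #(closedBallFinset R : Finset E) * ∑' w : {w : E // R < ‖w‖}, h w ^ 2 := by
  have hsplit (x : E) (hx : x ∈ closedBallFinset R) : ∑' z, h z * h (z - x)
      ≤ ∑ z ∈ closedBallFinset (2 * R), h z * h (z - x) + ∑' w : {w : E // R < ‖w‖}, h w ^ 2 := by
    rw [← (summable_mul_comp_sub hsq x).sum_add_tsum_compl]
    grw [tsum_compl_closedBallFinset_mul_comp_sub_le hsq (mem_closedBallFinset.1 hx)]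
  grw [sum_le_sum hsplit, sum_add_distrib, sum_comm, sum_const, nsmul_eq_mul, sum_mul]
  gcongr with z hz
  rw [← mul_sum]
  exact mul_le_mul_of_nonneg_left
    (sum_closedBallFinset_comp_sub_le hpos (mem_closedBallFinset.1 hz)) (hpos z)

end Convolution

end Shells

section Lattice

variable {d : ℕ}

lemma znorm_eq_norm (x : Fin d → ℤ) : znorm d x = ‖x‖ := by
  unfold znorm
  rw [Pi.norm_def, Pi.norm_def]
  norm_cast

lemma card_closedBallFinset_le {r : ℝ} (hr : 1 ≤ r) :
    (#(closedBallFinset r : Finset (Fin d → ℤ)) : ℝ) ≤ (3 * r) ^ d := by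
  have hsub : (closedBallFinset r : Finset (Fin d → ℤ)) ⊆
      Fintype.piFinset fun _ => Icc (-⌊r⌋) ⌊r⌋ := by
    intro x hx
    refine Fintype.mem_piFinset.2 fun i => mem_Icc.2 (abs_le.1 (Int.le_floor.2 ?_))
    have hxi : |(x i : ℝ)| ≤ r := by
      simpa [Int.norm_eq_abs] using (norm_le_pi_norm x i).trans (mem_closedBallFinset.1 hx)
    push_cast
    exact hxi
  have hIcc : (#(Icc (-⌊r⌋) ⌊r⌋) : ℝ) ≤ 3 * r := by
    have hfloor : 0 ≤ ⌊r⌋ := Int.floor_nonneg.2 (zero_le_one.trans hr)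
    rw [Int.card_Icc, ← Int.cast_natCast (R := ℝ), Int.toNat_of_nonneg (by omega)]
    push_cast
    linarith [Int.floor_le r]
  calc (#(closedBallFinset r : Finset (Fin d → ℤ)) : ℝ)
      ≤ #(Fintype.piFinset fun _ : Fin d => Icc (-⌊r⌋) ⌊r⌋) := by exact_mod_cast card_le_card hsub
    _ ≤ (3 * r) ^ d := by
        rw [Fintype.card_piFinset, prod_const, card_univ, Fintype.card_fin]
        push_cast
        gcongr

lemma sum_shellFinset_le_sqrt_mul {h : (Fin d → ℤ) → ℝ} {C ρ : ℝ} (hρ : 1 ≤ ρ)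
    (hsq : ∑ z ∈ shellFinset ρ (2 * ρ), h z ^ 2 ≤ C * ρ ^ (2 - (d : ℝ))) :
    ∑ z ∈ shellFinset ρ (2 * ρ), h z ≤ √(6 ^ d * C) * ρ := by
  have hcard : (#(shellFinset ρ (2 * ρ) : Finset (Fin d → ℤ)) : ℝ) ≤ (6 * ρ) ^ d :=
    calc (#(shellFinset ρ (2 * ρ) : Finset (Fin d → ℤ)) : ℝ)
        ≤ #(closedBallFinset (2 * ρ) : Finset (Fin d → ℤ)) := by
          exact_mod_cast card_le_card (filter_subset _ _)
      _ ≤ (3 * (2 * ρ)) ^ d := card_closedBallFinset_le (by linarith)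
      _ = (6 * ρ) ^ d := by ring
  calc ∑ z ∈ shellFinset ρ (2 * ρ), h z ≤ √((6 * ρ) ^ d * (C * ρ ^ (2 - (d : ℝ)))) :=
        sum_le_sqrt_card_mul _ hcard hsq
    _ = √(6 ^ d * C * ρ ^ 2) := by
        rw [← Real.pow_mul_rpow_two_sub (by linarith) d]
        ring_nf
    _ = √(6 ^ d * C) * ρ := by rw [Real.sqrt_mul' _ (sq_nonneg ρ), Real.sqrt_sq (by linarith)]

lemma exists_sum_closedBallFinset_le_mul {h : (Fin d → ℤ) → ℝ} (hpos : 0 ≤ h) {C R₀ : ℝ}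
    (hR₀ : 1 ≤ R₀) (hball : ∑ z ∈ closedBallFinset R₀, h z ^ 2 ≤ C)
    (hshell : ∀ ρ ≥ R₀, ∑ z ∈ shellFinset ρ (2 * ρ), h z ^ 2 ≤ C * ρ ^ (2 - (d : ℝ))) :
    ∃ c, ∀ r ≥ R₀, ∑ z ∈ closedBallFinset r, h z ≤ c * r := by
  set a := √(6 ^ d * C)
  set b := √((3 * R₀) ^ d * C)
  have hdyadic (n : ℕ) : ∑ z ∈ closedBallFinset (2 ^ n * R₀), h z ≤ b + a * (2 ^ n * R₀) := by
    induction n with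
    | zero =>
      rw [pow_zero, one_mul]
      have hb := sum_le_sqrt_card_mul _ (card_closedBallFinset_le hR₀) hball
      have haR₀ : 0 ≤ a * R₀ := by positivity
      linarith
    | succ n ih =>
      have hscale : R₀ ≤ 2 ^ n * R₀ := le_mul_of_one_le_left (by linarith) (one_le_pow₀ one_le_two)
      rw [pow_succ', mul_assoc,
        ← sum_closedBallFinset_add_sum_shellFinset h (by linarith : 2 ^ n * R₀ ≤ 2 * (2 ^ n * R₀))]
      linarith [sum_shellFinset_le_sqrt_mul (hR₀.trans hscale) (hshell _ hscale)]
  refine ⟨b + 2 * a, fun r hr => ?_⟩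
  obtain ⟨n, hn, hn'⟩ :=
    exists_nat_pow_near (x := r / R₀) ((one_le_div (by linarith)).2 hr) one_lt_two
  rw [le_div_iff₀ (by linarith)] at hn
  rw [div_lt_iff₀ (by linarith)] at hn'
  have ha : 0 ≤ a := Real.sqrt_nonneg _
  have hb : 0 ≤ b := Real.sqrt_nonneg _
  calc ∑ z ∈ closedBallFinset r, h z ≤ ∑ z ∈ closedBallFinset (2 ^ (n + 1) * R₀), h z :=
        sum_le_sum_of_subset_of_nonneg (closedBallFinset_mono hn'.le) fun z _ _ => hpos z
    _ ≤ b + a * (2 ^ (n + 1) * R₀) := hdyadic _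
    _ ≤ (b + 2 * a) * r := by
        rw [pow_succ]
        nlinarith [mul_le_mul_of_nonneg_left hn ha, mul_le_mul_of_nonneg_left hr.le hb]

lemma sum_closedBallFinset_tsum_mul_comp_sub_le_mul_sq {h : (Fin d → ℤ) → ℝ} (hpos : 0 ≤ h)
    (hsq : Summable fun z => h z ^ 2) {c K R : ℝ} (hR : 1 ≤ R)
    (hmass : ∀ r ≥ R, ∑ z ∈ closedBallFinset r, h z ≤ c * r)
    (htail : ∑' w : {w : Fin d → ℤ // R < ‖w‖}, h w ^ 2 ≤ K * R ^ (2 - (d : ℝ))) :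
    ∑ x ∈ closedBallFinset R, ∑' z, h z * h (z - x) ≤ (6 * c ^ 2 + 3 ^ d * K) * R ^ 2 := by
  have hS₂ : 0 ≤ ∑ z ∈ closedBallFinset (2 * R), h z := sum_nonneg fun z _ => hpos z
  have hS₃ : 0 ≤ ∑ z ∈ closedBallFinset (3 * R), h z := sum_nonneg fun z _ => hpos z
  calc ∑ x ∈ closedBallFinset R, ∑' z, h z * h (z - x)
      ≤ (∑ z ∈ closedBallFinset (2 * R), h z) * ∑ w ∈ closedBallFinset (3 * R), h w
        + #(closedBallFinset R : Finset (Fin d → ℤ)) * ∑' w : {w : Fin d → ℤ // R < ‖w‖}, h w ^ 2 :=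
        sum_closedBallFinset_tsum_mul_comp_sub_le hpos hsq R
    _ ≤ (c * (2 * R)) * (c * (3 * R)) + (3 * R) ^ d * (K * R ^ (2 - (d : ℝ))) := by
        refine add_le_add ?_ ?_
        · exact mul_le_mul (hmass _ (by linarith)) (hmass _ (by linarith)) hS₃
            (hS₂.trans (hmass _ (by linarith)))
        · exact mul_le_mul (card_closedBallFinset_le hR) htail
            (tsum_nonneg fun w => sq_nonneg _) (by positivity)
    _ = (6 * c ^ 2 + 3 ^ d * K) * R ^ 2 := by
        rw [mul_pow]
        linear_combination (3 ^ d * K) * Real.pow_mul_rpow_two_sub (by linarith : (0 : ℝ) < R) d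

end Lattice

/-- Convolution decay lemma (case `d > 2`, Lemma 2.10 of Gloria–Otto): annular
`L²` bounds `∑_{R<|z|≤2R} h² ≲ R^{2-d}` and a near-origin bound imply
`∑_{|x|≤R} ∑_z h(z) h(z-x) ≲ R²` for all large `R`. -/
theorem convolution_decay (d : ℕ) (hd : 2 < d)
    (h : (Fin d → ℤ) → ℝ) (hpos : ∀ z, 0 ≤ h z)
    (C₀ R₀ : ℝ) (hC₀ : 0 < C₀) (hR₀ : 1 ≤ R₀)
    (hann : ∀ R : ℝ, R₀ ≤ R →
      ∑' z : {z : Fin d → ℤ // R < znorm d z ∧ znorm d z ≤ 2 * R}, h z.1 ^ 2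
        ≤ C₀ * R ^ (2 - (d : ℝ)))
    (hball : ∑' z : {z : Fin d → ℤ // znorm d z ≤ R₀}, h z.1 ^ 2 ≤ C₀) :
    ∃ C₁ > (0 : ℝ), ∀ R : ℝ, R₀ ≤ R →
      ∑' x : {x : Fin d → ℤ // znorm d x ≤ R},
          ∑' z : Fin d → ℤ, h z * h (z - x.1)
        ≤ C₁ * R ^ 2 := by
  have hshell (ρ : ℝ) (hρ : ρ ≥ R₀) :
      ∑ z ∈ shellFinset ρ (2 * ρ), h z ^ 2 ≤ C₀ * ρ ^ (2 - (d : ℝ)) :=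
    (tsum_subtype_eq_sum_of_iff _ (fun z => by simp [znorm_eq_norm]) _).symm.trans_le (hann ρ hρ)
  have hball' : ∑ z ∈ closedBallFinset R₀, h z ^ 2 ≤ C₀ :=
    (tsum_subtype_eq_sum_of_iff _ (fun z => by simp [znorm_eq_norm]) _).symm.trans_le hball
  have hp : 2 - (d : ℝ) < 0 := by
    have : (2 : ℝ) < d := by exact_mod_cast hd
    linarith
  have hq : 0 < 1 - (2 : ℝ) ^ (2 - (d : ℝ)) :=
    sub_pos.2 (Real.rpow_lt_one_of_one_lt_of_neg one_lt_two hp)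
  have hsq : Summable fun z => h z ^ 2 :=
    summable_of_sum_shellFinset_le hC₀.le hp (by linarith) hshell fun z => sq_nonneg (h z)
  obtain ⟨c, hc⟩ := exists_sum_closedBallFinset_le_mul hpos hR₀ hball' hshell
  refine ⟨6 * c ^ 2 + 3 ^ d * (C₀ * (1 - 2 ^ (2 - (d : ℝ)))⁻¹),
    add_pos_of_nonneg_of_pos (by positivity) (mul_pos (by positivity) (mul_pos hC₀ (inv_pos.2 hq))),
    fun R hR => ?_⟩
  calc ∑' x : {x : Fin d → ℤ // znorm d x ≤ R}, ∑' z : Fin d → ℤ, h z * h (z - x.1)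
      = ∑ x ∈ closedBallFinset R, ∑' z, h z * h (z - x) :=
        tsum_subtype_eq_sum_of_iff (p := fun x => znorm d x ≤ R) _
          (fun x => by simp [znorm_eq_norm]) fun x => ∑' z, h z * h (z - x)
    _ ≤ (6 * c ^ 2 + 3 ^ d * (C₀ * (1 - 2 ^ (2 - (d : ℝ)))⁻¹)) * R ^ 2 :=
        sum_closedBallFinset_tsum_mul_comp_sub_le_mul_sq hpos hsq (hR₀.trans hR)
          (fun r hr => hc r (hR.trans hr)) (tsum_lt_norm_le_of_sum_shellFinset_le hC₀.le hp
            (by linarith) (fun ρ hρ => hshell ρ (hR.trans hρ)) fun z => sq_nonneg (h z))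
end
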